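/- Characterization of symmetrizability for the one-parameter D2Q9 model: let h̄ > 0, e > 0, g > 0 and λ ∈ ℝ be such that the three numbers (8+λ)e² − 3(4+λ)gh̄, (1−λ)e² + 3(1+λ)gh̄ and (λ−1)e² + 3(2−λ)gh̄ are all nonzero. Let D be the 9×9 matrix with D_{0j} = (8+λ)/9 − (4+λ)gh̄/(3e²) for all j, D_{ij} = (1−λ)/18 + (1+λ)gh̄/(6e²) + (ξ_i·ξ_j)/(3e²) for 1 ≤ i ≤ 4, and D_{ij} = (λ−1)/36 + (2−λ)gh̄/(12e²) + (ξ_i·ξ_j)/(12e²) for 5 ≤ i ≤ 8, and let D₀ = diag(9e²/((8+λ)e² − 3(4+λ)gh̄), (18e²/((1−λ)e² + 3(1+λ)gh̄))·I₄, (36e²/((λ−1)e² + 3(2−λ)gh̄))·I₄). Then D₀·D is a symmetric matrix if and only if λ = 1 or gh̄ = e²/3. -/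

import Mathlib

/-- Dot product on `ℝ × ℝ`. -/
def pdot (a b : ℝ × ℝ) : ℝ := a.1 * b.1 + a.2 * b.2

/-- The D2Q9 lattice velocities with lattice speed `e`. -/
def xi9 (e : ℝ) : Fin 9 → ℝ × ℝ :=
  ![(0, 0), (e, 0), (0, e), (-e, 0), (0, -e), (e, e), (-e, e), (-e, -e), (e, -e)]

/-- The Jacobian of the one-parameter D2Q9 equilibrium distribution at the
rest state `(h̄, 0)`. -/
noncomputable def D9 (g l e hb : ℝ) : Matrix (Fin 9) (Fin 9) ℝ :=
  Matrix.of fun i j =>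
    if i = 0 then (8 + l) / 9 - (4 + l) * g * hb / (3 * e ^ 2)
    else if (i : ℕ) ≤ 4 then
      (1 - l) / 18 + (1 + l) * g * hb / (6 * e ^ 2) + pdot (xi9 e i) (xi9 e j) / (3 * e ^ 2)
    else
      (l - 1) / 36 + (2 - l) * g * hb / (12 * e ^ 2) + pdot (xi9 e i) (xi9 e j) / (12 * e ^ 2)

/-- The candidate diagonal symmetrizer `D₀` for the one-parameter D2Q9 model. -/
noncomputable def D0 (g l e hb : ℝ) : Matrix (Fin 9) (Fin 9) ℝ :=
  Matrix.diagonal fun i =>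
    if i = 0 then 9 * e ^ 2 / ((8 + l) * e ^ 2 - 3 * (4 + l) * g * hb)
    else if (i : ℕ) ≤ 4 then 18 * e ^ 2 / ((1 - l) * e ^ 2 + 3 * (1 + l) * g * hb)
    else 36 * e ^ 2 / ((l - 1) * e ^ 2 + 3 * (2 - l) * g * hb)

set_option maxHeartbeats 1000000 in
theorem d2q9_lambda_symmetrizable_iff (hb e g l : ℝ) (hhb : 0 < hb) (he : 0 < e)
    (hg0 : 0 < g)
    (h1 : (8 + l) * e ^ 2 - 3 * (4 + l) * g * hb ≠ 0)
    (h2 : (1 - l) * e ^ 2 + 3 * (1 + l) * g * hb ≠ 0)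
    (h3 : (l - 1) * e ^ 2 + 3 * (2 - l) * g * hb ≠ 0) :
    (D0 g l e hb * D9 g l e hb).IsSymm ↔ l = 1 ∨ g * hb = e ^ 2 / 3 := by
  have he2 : e ^ 2 ≠ 0 := pow_ne_zero 2 he.ne'
  have pcomm : ∀ a b : ℝ × ℝ, pdot a b = pdot b a := by
    intro a b; simp [pdot]; ring
  have pd0r : ∀ k : Fin 9, pdot (xi9 e k) (xi9 e 0) = 0 := by
    intro k; simp [pdot, xi9]
  have pd0l : ∀ k : Fin 9, pdot (xi9 e 0) (xi9 e k) = 0 := by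
    intro k; simp [pdot, xi9]
  constructor
  · intro h
    have key := h.apply 1 5
    simp only [D0, D9, Matrix.diagonal_mul, Matrix.of_apply,
      if_neg (by decide : ¬ (5:Fin 9) = 0), if_neg (by decide : ¬ ((5:Fin 9):ℕ) ≤ 4),
      if_neg (by decide : ¬ (1:Fin 9) = 0), if_pos (by decide : ((1:Fin 9):ℕ) ≤ 4)] at key
    have hx1 : xi9 e 1 = (e, 0) := rfl
    have hx5 : xi9 e 5 = (e, e) := rfl
    have hpd1 : pdot (xi9 e 5) (xi9 e 1) = e ^ 2 := by rw [hx1, hx5]; simp [pdot]; ring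
    have hpd2 : pdot (xi9 e 1) (xi9 e 5) = e ^ 2 := by rw [hx1, hx5]; simp [pdot]; ring
    rw [hpd1, hpd2] at key
    rw [div_mul_eq_mul_div, div_mul_eq_mul_div, div_eq_div_iff h3 h2] at key
    field_simp at key
    have hz' : 15116544 * e ^ 10 * ((1 - l) * (e ^ 2 - 3 * (g * hb)))
        = 15116544 * e ^ 10 * 0 := by linear_combination (7776 * e ^ 8) * key
    have hz : (1 - l) * (e ^ 2 - 3 * (g * hb)) = 0 :=
      mul_left_cancel₀ (by positivity) hz'
    rcases mul_eq_zero.mp hz with hz | hz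
    · left; linarith
    · right; linarith
  · intro h
    have hAB : (1 - l) * e ^ 2 + 3 * (1 + l) * g * hb
        = 2 * ((l - 1) * e ^ 2 + 3 * (2 - l) * g * hb) := by
      rcases h with h | h
      · subst h; ring
      · linear_combination (9 * l - 9) * h
    rw [Matrix.IsSymm, ← Matrix.ext_iff]
    intro i j
    simp only [Matrix.transpose_apply, D0, D9, Matrix.diagonal_mul, Matrix.of_apply]
    by_cases hi : i = 0 <;> by_cases hj : j = 0
    · subst hi; subst hj; rfl
    · subst hi
      simp only [if_pos rfl, ↓reduceIte, if_neg hj, pd0l, pd0r]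
      by_cases hj4 : (j : ℕ) ≤ 4
      · simp only [if_pos hj4]; rw [div_mul_eq_mul_div, div_mul_eq_mul_div, div_eq_div_iff h2 h1]; field_simp; ring
      · simp only [if_neg hj4]; rw [div_mul_eq_mul_div, div_mul_eq_mul_div, div_eq_div_iff h3 h1]; field_simp; ring
    · subst hj
      simp only [if_pos rfl, ↓reduceIte, if_neg hi, pd0l, pd0r]
      by_cases hi4 : (i : ℕ) ≤ 4
      · simp only [if_pos hi4]; rw [div_mul_eq_mul_div, div_mul_eq_mul_div, div_eq_div_iff h1 h2]; field_simp; ring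
      · simp only [if_neg hi4]; rw [div_mul_eq_mul_div, div_mul_eq_mul_div, div_eq_div_iff h1 h3]; field_simp; ring
    · simp only [if_neg hi, if_neg hj]
      rw [pcomm (xi9 e j) (xi9 e i)]
      generalize pdot (xi9 e i) (xi9 e j) = p
      by_cases hi4 : (i : ℕ) ≤ 4 <;> by_cases hj4 : (j : ℕ) ≤ 4
      · simp only [if_pos hi4, if_pos hj4]
      · simp only [if_pos hi4, if_neg hj4]
        rw [div_mul_eq_mul_div, div_mul_eq_mul_div, div_eq_div_iff h3 h2]; 
        field_simp
        linear_combination (648 * p) * hAB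
      · simp only [if_neg hi4, if_pos hj4]
        rw [div_mul_eq_mul_div, div_mul_eq_mul_div, div_eq_div_iff h2 h3]; 
        field_simp
        linear_combination (-648 * p) * hAB
      · simp only [if_neg hi4, if_neg hj4]
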